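/- For every n ≥ 1 and every N ≥ 1 there exists a constant L ≥ 1, depending only on n and N, with the following property: if S is a family of exactly N distinct unit lattice cubes in ℝⁿ such that the simple graph on S whose edges are the adjacent pairs is connected and acyclic (a tree) and any two non-adjacent cubes of S are disjoint, then there exists a bijection f : ⋃ S → [0,1]ⁿ such that (1/L)·‖x − y‖ ≤ ‖f(x) − f(y)‖ ≤ L·‖x − y‖ for all x, y ∈ ⋃ S (an L-bilipschitz homeomorphism onto the unit cube). -/

import Mathlib

open Set

/-- The unit lattice cube `v + [0,1]ⁿ` in `ℝⁿ`, for `v ∈ ℤⁿ`. -/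
def latticeCube {n : ℕ} (v : Fin n → ℤ) : Set (EuclideanSpace ℝ (Fin n)) :=
  {x | ∀ i, (v i : ℝ) ≤ x i ∧ x i ≤ (v i : ℝ) + 1}

/-- Two unit lattice cubes are adjacent if their base vertices differ by a standard
basis vector, i.e. they share a common `(n-1)`-dimensional face. -/
def cubeAdj {n : ℕ} (v w : Fin n → ℤ) : Prop :=
  ∃ k : Fin n, w = v + Pi.single k 1 ∨ v = w + Pi.single k 1

/-- The adjacency graph of a finite family `S` of unit lattice cubes (indexed by
their base vertices). -/
def cubeGraph {n : ℕ} (S : Finset (Fin n → ℤ)) : SimpleGraph ↥S :=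
  SimpleGraph.fromRel fun a b =>
    ∃ k : Fin n, (b : Fin n → ℤ) = (a : Fin n → ℤ) + Pi.single k 1

/-- The unit cube `[0,1]ⁿ` in `ℝⁿ`. -/
def unitCube (n : ℕ) : Set (EuclideanSpace ℝ (Fin n)) :=
  {x | ∀ i, x i ∈ Icc (0 : ℝ) 1}

namespace TunnelAux

lemma cubes_not_disjoint {n : ℕ} (v w : Fin n → ℤ) (h : ∀ i, |v i - w i| ≤ 1) :
    ¬ Disjoint (latticeCube v) (latticeCube w) := by
  rw [Set.not_disjoint_iff]
  refine ⟨(WithLp.toLp 2 (fun i => ((max (v i) (w i) : ℤ) : ℝ)) : EuclideanSpace ℝ (Fin n)), ?_, ?_⟩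
  · intro i
    have h1 := abs_le.1 (h i)
    exact ⟨by exact_mod_cast Int.cast_le.2 (le_max_left (v i) (w i)),
      by exact_mod_cast Int.cast_le.2 (max_le (by omega) (by omega))⟩
  · intro i
    have h1 := abs_le.1 (h i)
    exact ⟨by exact_mod_cast Int.cast_le.2 (le_max_right (v i) (w i)),
      by exact_mod_cast Int.cast_le.2 (max_le (by omega) (by omega))⟩

lemma cubeAdj_symm {n : ℕ} {v w : Fin n → ℤ} (h : cubeAdj v w) : cubeAdj w v := by
  obtain ⟨k, h | h⟩ := h
  exacts [⟨k, Or.inr h⟩, ⟨k, Or.inl h⟩]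

lemma adj_cubeAdj {n : ℕ} {S : Finset (Fin n → ℤ)} {u v : ↥S}
    (h : (cubeGraph S).Adj u v) : cubeAdj (u : Fin n → ℤ) (v : Fin n → ℤ) := by
  rw [cubeGraph, SimpleGraph.fromRel_adj] at h
  obtain ⟨-, ⟨k, hk⟩ | ⟨k, hk⟩⟩ := h
  exacts [⟨k, Or.inl hk⟩, ⟨k, Or.inr hk⟩]

lemma cubeAdj_cases {n : ℕ} {v w : Fin n → ℤ} (h : cubeAdj v w) :
    ∃ k, (w k = v k + 1 ∨ v k = w k + 1) ∧ ∀ i, i ≠ k → v i = w i := by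
  obtain ⟨k, h | h⟩ := h
  · exact ⟨k, Or.inl (by rw [h]; simp),
      fun i hi => by rw [h]; simp [Pi.single, Function.update, hi]⟩
  · exact ⟨k, Or.inr (by rw [h]; simp),
      fun i hi => by rw [h]; simp [Pi.single, Function.update, hi]⟩

/-- If both endpoints agree with `a` off coordinate `k`, an adjacency between them
is along coordinate `k`. -/
lemma adj_along {n : ℕ} {a u w : Fin n → ℤ} {k : Fin n}
    (Qu : ∀ i, i ≠ k → u i = a i) (Qw : ∀ i, i ≠ k → w i = a i)
    (huw : cubeAdj u w) :
    (w k = u k + 1 ∨ u k = w k + 1) ∧ ∀ i, i ≠ k → u i = w i := by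
  obtain ⟨k', h1, h2⟩ := cubeAdj_cases huw
  by_cases hk : k' = k
  · subst hk
    exact ⟨h1, fun i hi => (Qu i hi).trans (Qw i hi).symm⟩
  · exfalso
    have := Qu k' hk
    have := Qw k' hk
    omega

/-- The bend-excluding step: if `u ~ w ~ c` are cubes in `S`, with `u, w` agreeing
with `a` off coordinate `k`, then `c` also agrees with `a` off coordinate `k`. -/
lemma step {n : ℕ} {S : Finset (Fin n → ℤ)}
    (hdisj : ∀ v ∈ S, ∀ w ∈ S, v ≠ w → ¬ cubeAdj v w →
      Disjoint (latticeCube v) (latticeCube w))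
    {a u w c : Fin n → ℤ} {k : Fin n} (hu : u ∈ S) (hc : c ∈ S)
    (Qu : ∀ i, i ≠ k → u i = a i) (Qw : ∀ i, i ≠ k → w i = a i)
    (huw : cubeAdj u w) (hwc : cubeAdj w c) : ∀ i, i ≠ k → c i = a i := by
  obtain ⟨j, hj1, hj2⟩ := cubeAdj_cases hwc
  by_cases hjk : j = k
  · subst hjk
    exact fun i hi => (hj2 i hi).symm.trans (Qw i hi)
  · exfalso
    obtain ⟨hk1, hk2⟩ := adj_along Qu Qw huw
    have e1 : w k = c k := hj2 k (fun h => hjk h.symm)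
    have e2 : u j = w j := hk2 j hjk
    have hujc : u j ≠ c j := by omega
    have hukc : u k ≠ c k := by omega
    have hne : u ≠ c := fun h => hujc (by rw [h])
    have hnadj : ¬ cubeAdj u c := by
      intro hadj
      obtain ⟨l, hl1, hl2⟩ := cubeAdj_cases hadj
      by_cases hlj : l = j
      · subst hlj
        exact hukc (hl2 k (fun h => hjk h.symm))
      · exact hujc (hl2 j (fun h => hlj h.symm))
    apply cubes_not_disjoint u c ?_ (hdisj u hu c hc hne hnadj)
    intro i
    rw [abs_le]
    by_cases hik : i = k
    · subst hik; omega
    · by_cases hij : i = j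
      · subst hij; have := hk2 i hik; omega
      · have := hk2 i hik; have := hj2 i hij; omega

lemma walk_Q {n : ℕ} {S : Finset (Fin n → ℤ)}
    (hdisj : ∀ v ∈ S, ∀ w ∈ S, v ≠ w → ¬ cubeAdj v w →
      Disjoint (latticeCube v) (latticeCube w)) {k : Fin n} :
    ∀ (v a : ↥S) (p : (cubeGraph S).Walk v a) (b : ↥S),
      cubeAdj (a : Fin n → ℤ) (b : Fin n → ℤ) →
      (∀ i, i ≠ k → (b : Fin n → ℤ) i = (a : Fin n → ℤ) i) →
      ∀ x ∈ p.support,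
      ∀ i, i ≠ k → (x : Fin n → ℤ) i = (a : Fin n → ℤ) i := by
  intro v a p
  induction p with
  | nil => intro b hab hQb x hx; simp at hx; subst hx; intro i _; rfl
  | @cons v y aa h' p ih =>
    intro b hab hQb x hx
    rw [SimpleGraph.Walk.support_cons, List.mem_cons] at hx
    rcases hx with rfl | hx
    · have hQy := ih b hab hQb y p.start_mem_support
      cases p with
      | nil =>
        exact step hdisj b.2 x.2 hQb (fun i _ => rfl) (cubeAdj_symm hab)
          (cubeAdj_symm (adj_cubeAdj h'))
      | @cons _ z _ h2 p2 =>
        have hQz := ih b hab hQb z (by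
          rw [SimpleGraph.Walk.support_cons]
          exact List.mem_cons_of_mem _ p2.start_mem_support)
        exact step hdisj z.2 x.2 hQz hQy (cubeAdj_symm (adj_cubeAdj h2))
          (cubeAdj_symm (adj_cubeAdj h'))
    · exact ih b hab hQb x hx

lemma norm_le_norm {n : ℕ} (u z : EuclideanSpace ℝ (Fin n)) (h : ∀ i, |u i| ≤ |z i|) :
    ‖u‖ ≤ ‖z‖ := by
  rw [EuclideanSpace.norm_eq, EuclideanSpace.norm_eq]
  apply Real.sqrt_le_sqrt
  apply Finset.sum_le_sum
  intro i _
  have h1 : ‖u i‖ ≤ ‖z i‖ := by simpa [Real.norm_eq_abs] using h i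
  exact pow_le_pow_left₀ (norm_nonneg _) h1 2

lemma walk_iff {V : Type*} {G : SimpleGraph V} {P : V → Prop}
    (h : ∀ a b, G.Adj a b → (P a ↔ P b)) {u v : V} (w : G.Walk u v) : P u ↔ P v := by
  induction w with
  | nil => rfl
  | cons h' _ ih => exact (h _ _ h').trans ih

lemma exists_base {n : ℕ} (hn : 1 ≤ n) {S : Finset (Fin n → ℤ)} (hS : S.Nonempty)
    (htree : (cubeGraph S).IsTree)
    (hdisj : ∀ v ∈ S, ∀ w ∈ S, v ≠ w → ¬ cubeAdj v w →
      Disjoint (latticeCube v) (latticeCube w)) :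
    ∃ a ∈ S, ∃ k : Fin n, ∀ v ∈ S, ∀ i, i ≠ k → v i = a i := by
  by_cases h2 : ∃ (p q : ↥S), (cubeGraph S).Adj p q
  · obtain ⟨p, q, hpq⟩ := h2
    have hcadj := adj_cubeAdj hpq
    obtain ⟨k, hk1, hk2⟩ := cubeAdj_cases hcadj
    refine ⟨p, p.2, k, ?_⟩
    intro v hv
    obtain ⟨w⟩ := htree.isConnected.preconnected ⟨v, hv⟩ p
    exact walk_Q hdisj ⟨v, hv⟩ p w q hcadj (fun i hi => (hk2 i hi).symm)
      ⟨v, hv⟩ w.start_mem_support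
  · obtain ⟨a, ha⟩ := hS
    refine ⟨a, ha, ⟨0, hn⟩, ?_⟩
    intro v hv i _
    have hva : (⟨v, hv⟩ : ↥S) = ⟨a, ha⟩ := by
      obtain ⟨w⟩ := htree.isConnected.preconnected ⟨v, hv⟩ ⟨a, ha⟩
      cases w with
      | nil => rfl
      | cons h _ => exact absurd ⟨_, _, h⟩ h2
    rw [Subtype.mk.injEq] at hva
    rw [hva]

end TunnelAux

/-- Tunnel contracting: a tunnel consisting of `N` unit lattice cubes admits an
`L(n,N)`-bilipschitz homeomorphism onto the unit cube `[0,1]ⁿ`. -/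
theorem tunnel_contracting (n N : ℕ) (hn : 1 ≤ n) (hN : 1 ≤ N) :
    ∃ L : ℝ, 1 ≤ L ∧
      ∀ S : Finset (Fin n → ℤ), S.card = N →
        (cubeGraph S).IsTree →
        (∀ v ∈ S, ∀ w ∈ S, v ≠ w → ¬ cubeAdj v w →
          Disjoint (latticeCube v) (latticeCube w)) →
        ∃ f : EuclideanSpace ℝ (Fin n) → EuclideanSpace ℝ (Fin n),
          Set.BijOn f (⋃ v ∈ S, latticeCube v) (unitCube n) ∧
          ∀ x ∈ (⋃ v ∈ S, latticeCube v), ∀ y ∈ (⋃ v ∈ S, latticeCube v),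
            (1 / L) * ‖x - y‖ ≤ ‖f x - f y‖ ∧ ‖f x - f y‖ ≤ L * ‖x - y‖ := by
  refine ⟨(N : ℝ), by exact_mod_cast hN, ?_⟩
  intro S hcard htree hdisj
  have hNR : (0 : ℝ) < N := by exact_mod_cast hN
  have hN0 : (N : ℝ) ≠ 0 := ne_of_gt hNR
  have hSne : S.Nonempty := by rw [← Finset.card_pos, hcard]; omega
  obtain ⟨a, ha, k, hQ⟩ := TunnelAux.exists_base hn hSne htree hdisj
  -- the k-th coordinates of the cubes
  have hinj : ∀ u ∈ S, ∀ v ∈ S, u k = v k → u = v := by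
    intro u hu v hv h
    funext i
    by_cases hik : i = k
    · rw [hik]; exact h
    · rw [hQ u hu i hik, hQ v hv i hik]
  set T : Finset ℤ := S.image (fun v => v k) with hT
  have hTne : T.Nonempty := hSne.image _
  have hTcard : T.card = N := by
    rw [hT, Finset.card_image_of_injOn (fun u hu v hv h => hinj u hu v hv h), hcard]
  set m := T.min' hTne with hm
  set M := T.max' hTne with hM
  have hmM : m ≤ M := T.min'_le _ (T.max'_mem hTne)
  -- convexity of T via connectivity
  have hTIcc : ∀ r, m ≤ r → r ≤ M → r ∈ T := by
    intro r h1 h2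
    by_contra hr
    have hrT : ∀ s ∈ S, s k ≠ r := by
      intro s hs he
      exact hr (hT ▸ Finset.mem_image.2 ⟨s, hs, he⟩)
    have hrm : m ≠ r := fun h => hr (h ▸ T.min'_mem hTne)
    have hrM : M ≠ r := fun h => hr (h ▸ T.max'_mem hTne)
    obtain ⟨vm, hvm, hvmk⟩ := Finset.mem_image.1 (T.min'_mem hTne)
    obtain ⟨vM, hvM, hvMk⟩ := Finset.mem_image.1 (T.max'_mem hTne)
    obtain ⟨p⟩ := htree.isConnected.preconnected ⟨vm, hvm⟩ ⟨vM, hvM⟩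
    have key := TunnelAux.walk_iff (P := fun x : ↥S => (x : Fin n → ℤ) k < r) ?_ p
    · have h3 : vm k < r := by omega
      have h4 : ¬ vM k < r := by simp only [hvMk]; omega
      exact h4 (key.1 h3)
    · intro x y hxy
      have hadj := TunnelAux.adj_cubeAdj hxy
      have hstep := (TunnelAux.adj_along (hQ x x.2) (hQ y y.2) hadj).1
      have hx := hrT x x.2
      have hy := hrT y y.2
      constructor <;> intro <;> omega
  have hTeq : T = Finset.Icc m M := by
    apply Finset.Subset.antisymm
    · intro r hrT'
      exact Finset.mem_Icc.2 ⟨T.min'_le r hrT', T.le_max' r hrT'⟩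
    · intro r hr
      obtain ⟨h1, h2⟩ := Finset.mem_Icc.1 hr
      exact hTIcc r h1 h2
  have hMN : M = m + N - 1 := by
    have hc : (Finset.Icc m M).card = N := by rw [← hTeq, hTcard]
    rw [Int.card_Icc] at hc
    omega
  -- characterization of S
  have hSmem : ∀ v : Fin n → ℤ,
      v ∈ S ↔ ((∀ i, i ≠ k → v i = a i) ∧ m ≤ v k ∧ v k ≤ M) := by
    intro v
    constructor
    · intro hv
      have hvk : v k ∈ T := Finset.mem_image_of_mem _ hv
      exact ⟨hQ v hv, T.min'_le _ hvk, T.le_max' _ hvk⟩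
    · rintro ⟨h1, h2, h3⟩
      obtain ⟨u, hu, huk⟩ := Finset.mem_image.1 (hTIcc _ h2 h3)
      have huv : u = v := by
        funext i
        by_cases hik : i = k
        · rw [hik]; exact huk
        · rw [hQ u hu i hik, h1 i hik]
      rwa [← huv]
  -- description of the union
  have hU : ∀ x : EuclideanSpace ℝ (Fin n),
      x ∈ (⋃ v ∈ S, latticeCube v) ↔
      ((∀ i, i ≠ k → (a i : ℝ) ≤ x i ∧ x i ≤ (a i : ℝ) + 1) ∧
        ((m : ℝ) ≤ x k ∧ x k ≤ (m : ℝ) + N)) := by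
    intro x
    simp only [Set.mem_iUnion, exists_prop]
    constructor
    · rintro ⟨v, hv, hxv⟩
      obtain ⟨h1, h2, h3⟩ := (hSmem v).1 hv
      refine ⟨fun i hik => by have := hxv i; rw [h1 i hik] at this; exact this, ?_, ?_⟩
      · have h4 : (m : ℝ) ≤ (v k : ℝ) := by exact_mod_cast h2
        exact h4.trans (hxv k).1
      · have h4 : (v k : ℝ) + 1 ≤ (m : ℝ) + N := by
          have h5 : v k + 1 ≤ m + (N : ℤ) := by omega
          exact_mod_cast h5
        exact (hxv k).2.trans h4
    · rintro ⟨h1, ⟨h2a, h2b⟩⟩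
      have hfl : m ≤ ⌊x k⌋ := Int.le_floor.2 (by exact_mod_cast h2a)
      obtain ⟨t, htm, htM, htl, htu⟩ :
          ∃ t : ℤ, m ≤ t ∧ t ≤ M ∧ (t : ℝ) ≤ x k ∧ x k ≤ (t : ℝ) + 1 := by
        rcases le_or_gt (⌊x k⌋) M with hc | hc
        · exact ⟨⌊x k⌋, hfl, hc, Int.floor_le _, (Int.lt_floor_add_one _).le⟩
        · refine ⟨M, hmM, le_refl M, ?_, ?_⟩
          · have h4 : (M : ℝ) < (⌊x k⌋ : ℝ) := by exact_mod_cast hc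
            exact (h4.trans_le (Int.floor_le _)).le
          · have h4 : (m : ℝ) + N = (M : ℝ) + 1 := by
              exact_mod_cast (show m + (N : ℤ) = M + 1 by omega)
            rw [← h4]; exact h2b
      refine ⟨fun i => if i = k then t else a i, ?_, ?_⟩
      · rw [hSmem]
        refine ⟨fun i hik => if_neg hik, ?_, ?_⟩
        · rw [if_pos rfl]; exact htm
        · rw [if_pos rfl]; exact htM
      · intro i
        show (↑(if i = k then t else a i) : ℝ) ≤ x i ∧ x i ≤ (↑(if i = k then t else a i) : ℝ) + 1
        by_cases hik : i = k
        · subst hik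
          rw [if_pos rfl]
          exact ⟨htl, htu⟩
        · rw [if_neg hik]
          exact h1 i hik
  -- the contracting affine map
  set f : EuclideanSpace ℝ (Fin n) → EuclideanSpace ℝ (Fin n) :=
    fun x => WithLp.toLp 2 (fun i => if i = k then (x i - m) / N else x i - a i) with hf
  have hfapp : ∀ (x : EuclideanSpace ℝ (Fin n)) (i : Fin n),
      f x i = if i = k then (x i - (m : ℝ)) / N else x i - a i := fun x i => rfl
  refine ⟨f, ⟨?_, ?_, ?_⟩, ?_⟩
  · -- MapsTo
    intro x hx
    rw [hU] at hx
    obtain ⟨h1, h2⟩ := hx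
    intro i
    rw [Set.mem_Icc, hfapp]
    by_cases hik : i = k
    · subst hik
      rw [if_pos rfl]
      constructor
      · exact div_nonneg (by linarith [h2.1]) hNR.le
      · rw [div_le_one hNR]; linarith [h2.2]
    · rw [if_neg hik]
      have := h1 i hik
      constructor <;> linarith [this.1, this.2]
  · -- InjOn
    intro x _ y _ h
    apply PiLp.ext; intro i
    have hi : f x i = f y i := by rw [h]
    rw [hfapp, hfapp] at hi
    by_cases hik : i = k
    · rw [if_pos hik, if_pos hik, div_eq_div_iff hN0 hN0] at hi
      have := mul_right_cancel₀ hN0 hi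
      linarith
    · rw [if_neg hik, if_neg hik] at hi
      linarith
  · -- SurjOn
    intro y hy
    have hy' : ∀ i, (0 : ℝ) ≤ y i ∧ y i ≤ 1 := fun i => Set.mem_Icc.1 (hy i)
    set g : EuclideanSpace ℝ (Fin n) :=
      WithLp.toLp 2 (fun i => if i = k then (m : ℝ) + N * y i else (a i : ℝ) + y i) with hg
    have hgk : g k = (m : ℝ) + N * y k := if_pos rfl
    have hgi : ∀ i, i ≠ k → g i = (a i : ℝ) + y i := by
      intro i hi
      show (if i = k then (m : ℝ) + N * y i else (a i : ℝ) + y i) = _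
      rw [if_neg hi]
    refine ⟨g, ?_, ?_⟩
    · rw [hU]
      refine ⟨?_, ?_, ?_⟩
      · intro i hik
        rw [hgi i hik]
        constructor <;> linarith [(hy' i).1, (hy' i).2]
      · rw [hgk]
        have := mul_nonneg hNR.le (hy' k).1
        linarith
      · rw [hgk]
        have := mul_le_of_le_one_right hNR.le (hy' k).2
        linarith
    · apply PiLp.ext; intro i
      rw [hfapp]
      by_cases hik : i = k
      · subst hik
        rw [if_pos rfl, hgk]
        field_simp
        ring
      · rw [if_neg hik, hgi i hik]
        ring
  · -- bilipschitz
    intro x _ y _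
    have hsub : ∀ i, (f x - f y) i = if i = k then (x i - y i) / N else x i - y i := by
      intro i
      rw [PiLp.sub_apply, hfapp, hfapp]
      by_cases hik : i = k
      · rw [if_pos hik, if_pos hik, if_pos hik]; ring
      · rw [if_neg hik, if_neg hik, if_neg hik]; ring
    have hup : ‖f x - f y‖ ≤ ‖x - y‖ := by
      apply TunnelAux.norm_le_norm
      intro i
      rw [hsub, PiLp.sub_apply]
      by_cases hik : i = k
      · rw [if_pos hik, abs_div, abs_of_pos hNR]
        exact div_le_self (abs_nonneg _) (by exact_mod_cast hN : (1 : ℝ) ≤ N)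
      · rw [if_neg hik]
    have hdown : ‖x - y‖ ≤ (N : ℝ) * ‖f x - f y‖ := by
      have h1 : ‖x - y‖ ≤ ‖(N : ℝ) • (f x - f y)‖ := by
        apply TunnelAux.norm_le_norm
        intro i
        rw [PiLp.smul_apply, smul_eq_mul, hsub, PiLp.sub_apply]
        by_cases hik : i = k
        · rw [if_pos hik, mul_div_cancel₀ _ hN0]
        · rw [if_neg hik, abs_mul, abs_of_pos hNR]
          exact le_mul_of_one_le_left (abs_nonneg _) (by exact_mod_cast hN : (1 : ℝ) ≤ N)
      rwa [norm_smul, Real.norm_eq_abs, abs_of_pos hNR] at h1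
    constructor
    · rw [one_div, inv_mul_le_iff₀ hNR]
      exact hdown
    · calc ‖f x - f y‖ ≤ ‖x - y‖ := hup
        _ ≤ (N : ℝ) * ‖x - y‖ := le_mul_of_one_le_left (norm_nonneg _) (by exact_mod_cast hN)
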